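/- Let Ω ⊂ ℝⁿ have finite Lebesgue measure, let γ ∈ L¹(ℝⁿ) be even, and suppose: (i) β > 0 satisfies B[u,u] ≥ β‖u‖²_{L²(Ω)} for every u ∈ L²(ℝⁿ) vanishing a.e. outside Ω; (ii) |f(x,t)| ≤ a₁ + a₂|t|^α for all x ∈ Ω, t ∈ ℝ; (iii) μ > 2 and C₀ ≥ 0 satisfy ∫_Ω ((1/μ) f(x,w(x)) w(x) − F(x,w(x))) dx ≥ −C₀ for every w ∈ L²(ℝⁿ) vanishing a.e. outside Ω with w|_Ω ∈ L^{α+1}(Ω). Let κ > 0 and let (u_j) be a sequence of functions in L²(ℝⁿ), each vanishing a.e. outside Ω with u_j|_Ω ∈ L^{α+1}(Ω), such that for all j: |I[u_j]| ≤ κ and |B[u_j,u_j] − ∫_Ω f(x,u_j(x)) u_j(x) dx| ≤ κμ‖u_j‖_{L²(Ω)}. Then sup_j ‖u_j‖_{L²(Ω)} < ∞. -/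

import Mathlib

open MeasureTheory

/-- The nonlocal bilinear form
`B[u,v] = (1/2) ∬ (u(y)-u(x)) γ(x-y) (v(y)-v(x)) dy dx`. -/
noncomputable def nonlocalForm (n : ℕ) (γ u v : EuclideanSpace ℝ (Fin n) → ℝ) : ℝ :=
  (1/2) * ∫ x, ∫ y, (u y - u x) * γ (x - y) * (v y - v x)

/-- `F(x,t) = ∫₀ᵗ f(x,τ) dτ`. -/
noncomputable def Fanti (n : ℕ) (f : EuclideanSpace ℝ (Fin n) → ℝ → ℝ)
    (x : EuclideanSpace ℝ (Fin n)) (t : ℝ) : ℝ :=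
  ∫ τ in (0:ℝ)..t, f x τ

/-- The energy `I[u] = (1/2) B[u,u] − ∫_Ω F(x,u(x)) dx`. -/
noncomputable def energy (n : ℕ) (Ω : Set (EuclideanSpace ℝ (Fin n)))
    (γ : EuclideanSpace ℝ (Fin n) → ℝ) (f : EuclideanSpace ℝ (Fin n) → ℝ → ℝ)
    (u : EuclideanSpace ℝ (Fin n) → ℝ) : ℝ :=
  (1/2) * nonlocalForm n γ u u - ∫ x in Ω, Fanti n f x (u x)

/-!
For each `u = u_j`, integrating `f(x,u)u` and `F(x,u)` separately (both are integrable on `Ω` by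
the growth bound) gives
`(1/2 - 1/μ) B[u,u] = I[u] - (1/μ) (B[u,u] - ∫ f(x,u) u) - ∫ ((1/μ) f(x,u) u - F(x,u))`.
Coercivity on the left and the three bounds on the right yield
`(1/2 - 1/μ) β ‖u‖² ≤ κ + κ ‖u‖ + C₀`, and since `μ > 2` this quadratic inequality bounds `‖u‖`
uniformly in `j`.
-/

theorem le_max_one_div_of_mul_sq_le {b c d s : ℝ} (hc : 0 < c) (h : c * s ^ 2 ≤ b * s + d) :
    s ≤ max 1 ((|b| + |d|) / c) := by
  rcases le_or_gt s 1 with hs1 | hs1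
  · exact le_max_of_le_left hs1
  · have hcs : c * s * s ≤ (|b| + |d|) * s := by
      nlinarith [le_abs_self b, le_abs_self d, abs_nonneg d]
    have : c * s ≤ |b| + |d| := le_of_mul_le_mul_right hcs (by linarith)
    exact le_max_of_le_right ((le_div_iff₀ hc).mpr (by linarith))

theorem abs_intervalIntegral_le_of_abs_le_growth {h : ℝ → ℝ} {a b α : ℝ} (hb : 0 ≤ b)
    (hα : 0 ≤ α) (hh : ∀ τ, |h τ| ≤ a + b * |τ| ^ α) (t : ℝ) :
    |∫ τ in (0:ℝ)..t, h τ| ≤ (a + b * |t| ^ α) * |t| := by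
  have hbound : ∀ τ ∈ Set.uIoc (0:ℝ) t, ‖h τ‖ ≤ a + b * |t| ^ α := by
    intro τ hτ
    have hτt : |τ| ≤ |t| := by
      rw [Set.mem_uIoc] at hτ
      rcases hτ with ⟨h0, ht⟩ | ⟨ht, h0⟩
      · rw [abs_of_pos h0, abs_of_pos (h0.trans_le ht)]; exact ht
      · rw [abs_of_nonpos h0, abs_of_neg (ht.trans_le h0)]; linarith
    calc ‖h τ‖ ≤ a + b * |τ| ^ α := hh τ
      _ ≤ a + b * |t| ^ α := by gcongr
  simpa using intervalIntegral.norm_integral_le_of_norm_le_const hbound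

section Caratheodory

variable {X : Type*} [MeasurableSpace X] {g : X → ℝ → ℝ}

theorem measurable_comp_of_caratheodory (hmeas : ∀ t, Measurable fun x => g x t)
    (hcont : ∀ x, Continuous (g x)) {v : X → ℝ} (hv : Measurable v) :
    Measurable fun x => g x (v x) :=
  (measurable_uncurry_of_continuous_of_measurable hcont hmeas).comp (hv.prodMk measurable_id)

theorem aestronglyMeasurable_comp_of_caratheodory (hmeas : ∀ t, Measurable fun x => g x t)
    (hcont : ∀ x, Continuous (g x)) {μ : Measure X} {v : X → ℝ}
    (hv : AEStronglyMeasurable v μ) : AEStronglyMeasurable (fun x => g x (v x)) μ :=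
  (measurable_comp_of_caratheodory hmeas hcont hv.measurable_mk).aestronglyMeasurable.congr <|
    hv.ae_eq_mk.mono fun x hx => by simp only [hx]

theorem measurable_intervalIntegral_of_caratheodory (hmeas : ∀ t, Measurable fun x => g x t)
    (hcont : ∀ x, Continuous (g x)) (a b : ℝ) :
    Measurable fun x => ∫ τ in a..b, g x τ := by
  have hg : StronglyMeasurable fun p : X × ℝ => g p.1 p.2 :=
    ((measurable_uncurry_of_continuous_of_measurable hcont hmeas).comp
      measurable_swap).stronglyMeasurable
  exact (hg.integral_prod_right' (ν := volume.restrict (Set.Ioc a b))).measurable.sub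
    (hg.integral_prod_right' (ν := volume.restrict (Set.Ioc b a))).measurable

theorem aestronglyMeasurable_primitive_comp_of_caratheodory
    (hmeas : ∀ t, Measurable fun x => g x t) (hcont : ∀ x, Continuous (g x)) {μ : Measure X}
    {v : X → ℝ} (hv : AEStronglyMeasurable v μ) :
    AEStronglyMeasurable (fun x => ∫ τ in (0:ℝ)..v x, g x τ) μ :=
  aestronglyMeasurable_comp_of_caratheodory
    (fun t => measurable_intervalIntegral_of_caratheodory hmeas hcont 0 t)
    (fun x => intervalIntegral.continuous_primitive
      (fun a b => (hcont x).intervalIntegrable a b) 0) hv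

variable {μ : Measure X} [IsFiniteMeasure μ] {v : X → ℝ} {a b α : ℝ}

theorem integrable_growth_of_memLp (hα : 0 ≤ α) (hv : MemLp v (ENNReal.ofReal (α + 1)) μ) :
    Integrable (fun x => (a + b * |v x| ^ α) * |v x|) μ := by
  have hv1 : Integrable v μ := memLp_one_iff_integrable.mp <|
    hv.mono_exponent (by rw [← ENNReal.ofReal_one]; exact ENNReal.ofReal_le_ofReal (by linarith))
  have hvα : Integrable (fun x => |v x| ^ (α + 1)) μ := by
    simpa [ENNReal.toReal_ofReal (by linarith : 0 ≤ α + 1)] using hv.integrable_norm_rpow'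
  refine ((hv1.abs.const_mul a).add (hvα.const_mul b)).congr (ae_of_all _ fun x => ?_)
  rcases eq_or_ne (v x) 0 with h | h
  · simp [h, Real.zero_rpow (by linarith : α + 1 ≠ 0)]
  · change a * |v x| + b * |v x| ^ (α + 1) = _
    rw [Real.rpow_add_one (abs_ne_zero.mpr h)]; ring

theorem integrable_comp_mul_of_growth (hmeas : ∀ t, Measurable fun x => g x t)
    (hcont : ∀ x, Continuous (g x)) (hα : 0 ≤ α)
    (hgrowth : ∀ᵐ x ∂μ, ∀ t, |g x t| ≤ a + b * |t| ^ α)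
    (hv : MemLp v (ENNReal.ofReal (α + 1)) μ) : Integrable (fun x => g x (v x) * v x) μ :=
  (integrable_growth_of_memLp (a := a) (b := b) hα hv).mono'
    ((aestronglyMeasurable_comp_of_caratheodory hmeas hcont hv.1).mul hv.1) <|
    hgrowth.mono fun x hx => by
      rw [Real.norm_eq_abs, abs_mul]
      exact mul_le_mul_of_nonneg_right (hx (v x)) (abs_nonneg _)

theorem integrable_primitive_comp_of_growth (hmeas : ∀ t, Measurable fun x => g x t)
    (hcont : ∀ x, Continuous (g x)) (hα : 0 ≤ α) (hb : 0 ≤ b)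
    (hgrowth : ∀ᵐ x ∂μ, ∀ t, |g x t| ≤ a + b * |t| ^ α)
    (hv : MemLp v (ENNReal.ofReal (α + 1)) μ) :
    Integrable (fun x => ∫ τ in (0:ℝ)..v x, g x τ) μ :=
  (integrable_growth_of_memLp (a := a) (b := b) hα hv).mono'
    (aestronglyMeasurable_primitive_comp_of_caratheodory hmeas hcont hv.1) <|
    hgrowth.mono fun x hx => abs_intervalIntegral_le_of_abs_le_growth hb hα hx (v x)

end Caratheodory

theorem energy_sub_inv_mul_eq {n : ℕ} {Ω : Set (EuclideanSpace ℝ (Fin n))}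
    (γ : EuclideanSpace ℝ (Fin n) → ℝ) {f : EuclideanSpace ℝ (Fin n) → ℝ → ℝ}
    {v : EuclideanSpace ℝ (Fin n) → ℝ} (μ : ℝ)
    (hfv : Integrable (fun x => f x (v x) * v x) (volume.restrict Ω))
    (hFv : Integrable (fun x => Fanti n f x (v x)) (volume.restrict Ω)) :
    energy n Ω γ f v - (1 / μ) * (nonlocalForm n γ v v - ∫ x in Ω, f x (v x) * v x) =
      (1 / 2 - 1 / μ) * nonlocalForm n γ v v +
        ∫ x in Ω, ((1 / μ) * f x (v x) * v x - Fanti n f x (v x)) := by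
  simp_rw [mul_assoc (1 / μ)]
  rw [integral_sub (hfv.const_mul _) hFv, integral_const_mul, energy]
  ring

theorem PS_sequence_bounded_general
    (n : ℕ) (Ω : Set (EuclideanSpace ℝ (Fin n))) (hΩ : MeasurableSet Ω)
    (hΩfin : volume Ω < ⊤)
    (γ : EuclideanSpace ℝ (Fin n) → ℝ)
    (f : EuclideanSpace ℝ (Fin n) → ℝ → ℝ)
    (hmeas : ∀ t : ℝ, Measurable fun x => f x t)
    (hcont : ∀ x, Continuous (f x))
    (a₁ a₂ α : ℝ) (hα : 1 < α)
    (hgrowth : ∀ x ∈ Ω, ∀ t : ℝ, |f x t| ≤ a₁ + a₂ * |t| ^ α)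
    (β : ℝ) (hβ : 0 < β)
    (hcoerc : ∀ u : EuclideanSpace ℝ (Fin n) → ℝ,
      MemLp u 2 (volume : Measure (EuclideanSpace ℝ (Fin n))) →
      (∀ᵐ x, x ∉ Ω → u x = 0) →
      β * ∫ x in Ω, (u x) ^ 2 ≤ nonlocalForm n γ u u)
    (μ C₀ : ℝ) (hμ : 2 < μ)
    (hAR : ∀ w : EuclideanSpace ℝ (Fin n) → ℝ,
      MemLp w 2 (volume : Measure (EuclideanSpace ℝ (Fin n))) →
      (∀ᵐ x, x ∉ Ω → w x = 0) →
      MemLp w (ENNReal.ofReal (α + 1)) (volume.restrict Ω) →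
      -C₀ ≤ ∫ x in Ω, ((1 / μ) * f x (w x) * w x - Fanti n f x (w x)))
    (κ : ℝ)
    (u : ℕ → EuclideanSpace ℝ (Fin n) → ℝ)
    (hu2 : ∀ j, MemLp (u j) 2 (volume : Measure (EuclideanSpace ℝ (Fin n))))
    (hu0 : ∀ j, ∀ᵐ x, x ∉ Ω → u j x = 0)
    (huα : ∀ j, MemLp (u j) (ENNReal.ofReal (α + 1)) (volume.restrict Ω))
    (hIb : ∀ j, |energy n Ω γ f (u j)| ≤ κ)
    (hDb : ∀ j, |nonlocalForm n γ (u j) (u j) - ∫ x in Ω, f x (u j x) * u j x| ≤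
      κ * μ * Real.sqrt (∫ x in Ω, (u j x) ^ 2)) :
    ∃ M : ℝ, ∀ j, Real.sqrt (∫ x in Ω, (u j x) ^ 2) ≤ M := by
  have hμ0 : 0 < μ := by linarith
  have hθ : 0 < 1 / 2 - 1 / μ := by
    rw [sub_pos]; exact one_div_lt_one_div_of_lt two_pos hμ
  have : IsFiniteMeasure (volume.restrict Ω) := ⟨by rwa [Measure.restrict_apply_univ]⟩
  have hgrowth' : ∀ᵐ x ∂volume.restrict Ω, ∀ t, |f x t| ≤ |a₁| + |a₂| * |t| ^ α :=
    (ae_restrict_mem hΩ).mono fun x hx t => (hgrowth x hx t).trans <| by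
      gcongr <;> exact le_abs_self _
  refine ⟨max 1 ((|κ| + |κ + C₀|) / ((1 / 2 - 1 / μ) * β)), fun j => ?_⟩
  set s := Real.sqrt (∫ x in Ω, (u j x) ^ 2)
  apply le_max_one_div_of_mul_sq_le (mul_pos hθ hβ)
  have hid := energy_sub_inv_mul_eq γ μ
    (integrable_comp_mul_of_growth hmeas hcont (by linarith) hgrowth' (huα j))
    (integrable_primitive_comp_of_growth hmeas hcont (by linarith) (abs_nonneg _) hgrowth'
      (huα j))
  have hB : β * s ^ 2 ≤ nonlocalForm n γ (u j) (u j) := by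
    rw [Real.sq_sqrt (integral_nonneg fun x => sq_nonneg _)]
    exact hcoerc (u j) (hu2 j) (hu0 j)
  have hD : -(κ * s) ≤
      (1 / μ) * (nonlocalForm n γ (u j) (u j) - ∫ x in Ω, f x (u j x) * u j x) :=
    calc -(κ * s) = (1 / μ) * -(κ * μ * s) := by field_simp
      _ ≤ _ := mul_le_mul_of_nonneg_left (abs_le.mp (hDb j)).1 (by positivity)
  have hA := hAR (u j) (hu2 j) (hu0 j) (huα j)
  linarith [(abs_le.mp (hIb j)).2, mul_le_mul_of_nonneg_left hB hθ.le]

/-- Boundedness of Palais–Smale-type sequences: under the coercivity of `B`, the growth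
bound on `f` and the Ambrosetti–Rabinowitz-type integral lower bound, any sequence with
`|I[u_j]| ≤ κ` and `|B[u_j,u_j] − ∫_Ω f(x,u_j)u_j| ≤ κμ‖u_j‖_{L²(Ω)}` is bounded in
`L²(Ω)`. -/
theorem PS_sequence_bounded
    (n : ℕ) (Ω : Set (EuclideanSpace ℝ (Fin n))) (hΩ : MeasurableSet Ω)
    (hΩfin : volume Ω < ⊤)
    (γ : EuclideanSpace ℝ (Fin n) → ℝ)
    (hγ : Integrable γ) (hγeven : ∀ z, γ (-z) = γ z)
    (f : EuclideanSpace ℝ (Fin n) → ℝ → ℝ)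
    (hmeas : ∀ t : ℝ, Measurable fun x => f x t)
    (hcont : ∀ x, Continuous (f x))
    (a₁ a₂ α : ℝ) (ha₁ : 0 < a₁) (ha₂ : 0 < a₂) (hα : 1 < α)
    (hgrowth : ∀ x ∈ Ω, ∀ t : ℝ, |f x t| ≤ a₁ + a₂ * |t| ^ α)
    (β : ℝ) (hβ : 0 < β)
    (hcoerc : ∀ u : EuclideanSpace ℝ (Fin n) → ℝ,
      MemLp u 2 (volume : Measure (EuclideanSpace ℝ (Fin n))) →
      (∀ᵐ x, x ∉ Ω → u x = 0) →
      β * ∫ x in Ω, (u x) ^ 2 ≤ nonlocalForm n γ u u)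
    (μ C₀ : ℝ) (hμ : 2 < μ) (hC₀ : 0 ≤ C₀)
    (hAR : ∀ w : EuclideanSpace ℝ (Fin n) → ℝ,
      MemLp w 2 (volume : Measure (EuclideanSpace ℝ (Fin n))) →
      (∀ᵐ x, x ∉ Ω → w x = 0) →
      MemLp w (ENNReal.ofReal (α + 1)) (volume.restrict Ω) →
      -C₀ ≤ ∫ x in Ω, ((1 / μ) * f x (w x) * w x - Fanti n f x (w x)))
    (κ : ℝ) (hκ : 0 < κ)
    (u : ℕ → EuclideanSpace ℝ (Fin n) → ℝ)
    (hu2 : ∀ j, MemLp (u j) 2 (volume : Measure (EuclideanSpace ℝ (Fin n))))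
    (hu0 : ∀ j, ∀ᵐ x, x ∉ Ω → u j x = 0)
    (huα : ∀ j, MemLp (u j) (ENNReal.ofReal (α + 1)) (volume.restrict Ω))
    (hIb : ∀ j, |energy n Ω γ f (u j)| ≤ κ)
    (hDb : ∀ j, |nonlocalForm n γ (u j) (u j) - ∫ x in Ω, f x (u j x) * u j x| ≤
      κ * μ * Real.sqrt (∫ x in Ω, (u j x) ^ 2)) :
    ∃ M : ℝ, ∀ j, Real.sqrt (∫ x in Ω, (u j x) ^ 2) ≤ M :=
  PS_sequence_bounded_general n Ω hΩ hΩfin γ f hmeas hcont a₁ a₂ α hα hgrowth β hβ hcoerc μ C₀ hμ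
    hAR κ u hu2 hu0 huα hIb hDb
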